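/- arXiv:0705.1026 — 2 statements merged into one kernel-verified Lean document; each statement's English description precedes it below -/
import Mathlib

section
/- Let a, b : [0,T] → ℝ be continuous, K⁺, K⁻ : [0,T] → ℝ increasing with K⁺(0) = K⁻(0) = 0, and suppose a(t) ≤ b(t) for all t with ∫_0^T (b(t) − a(t)) dK⁻(t) = 0. If Y¹, Y² : [0,T] → ℝ are continuous with a ≤ Y¹, Y² ≤ b, then ∫_0^T (Y¹(t) − Y²(t))⁺ d(K⁻¹(t) − K⁻²(t)) ≥ 0 whenever K⁻¹ increases only on {Y¹ = b} and K⁻² increases only on {Y² = b}. -/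
open Set MeasureTheory

/-!
Since `Y₂ ≤ b`, the Skorokhod condition `∫ (b - Y₂) dK₂ = 0` forces `Y₂ = b` `dK₂`-almost
everywhere, and there `(Y₁ - Y₂)⁺ = (Y₁ - b)⁺ = 0`. So the `dK₂`-integral vanishes, while the
`dK₁`-integral of a nonnegative function is nonnegative.
-/

section SkorokhodCondition

variable {α : Type*} [MeasurableSpace α] {μ : Measure α} {s : Set α} {f g : α → ℝ}

theorem ae_restrict_eq_of_setIntegral_sub_eq_zero (hs : MeasurableSet s)
    (hint : IntegrableOn (fun x => f x - g x) s μ) (hgf : ∀ x ∈ s, g x ≤ f x)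
    (hzero : ∫ x in s, (f x - g x) ∂μ = 0) : ∀ᵐ x ∂μ.restrict s, g x = f x := by
  have hnonneg : 0 ≤ᵐ[μ.restrict s] fun x => f x - g x := by
    filter_upwards [ae_restrict_mem hs] with x hx
    exact sub_nonneg.2 (hgf x hx)
  filter_upwards [(integral_eq_zero_iff_of_nonneg_ae hnonneg hint).1 hzero] with x hx
  exact (sub_eq_zero.1 hx).symm

theorem setIntegral_max_sub_zero_eq_zero_of_ae_eq {h : α → ℝ} (hs : MeasurableSet s)
    (hhf : ∀ x ∈ s, h x ≤ f x) (hgf : ∀ᵐ x ∂μ.restrict s, g x = f x) :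
    ∫ x in s, max (h x - g x) 0 ∂μ = 0 := by
  refine integral_eq_zero_of_ae ?_
  filter_upwards [hgf, ae_restrict_mem hs] with x hx hxs
  simp [hx, hhf x hxs]

end SkorokhodCondition

theorem stmt_11_general (T : ℝ) (b Y₁ Y₂ : ℝ → ℝ)
    (hb : ContinuousOn b (Icc 0 T))
    (hY₂ : ContinuousOn Y₂ (Icc 0 T))
    (hY₁b : ∀ t ∈ Icc 0 T, Y₁ t ≤ b t)
    (hY₂b : ∀ t ∈ Icc 0 T, Y₂ t ≤ b t)
    (K₁ K₂ : StieltjesFunction ℝ)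
    (hSk₂ : ∫ t in Icc 0 T, (b t - Y₂ t) ∂K₂.measure = 0) :
    0 ≤ (∫ t in Icc 0 T, max (Y₁ t - Y₂ t) 0 ∂K₁.measure) -
        ∫ t in Icc 0 T, max (Y₁ t - Y₂ t) 0 ∂K₂.measure := by
  have hY₂_eq_b : ∀ᵐ t ∂K₂.measure.restrict (Icc 0 T), Y₂ t = b t :=
    ae_restrict_eq_of_setIntegral_sub_eq_zero measurableSet_Icc
      ((hb.sub hY₂).integrableOn_compact isCompact_Icc) hY₂b hSk₂
  rw [setIntegral_max_sub_zero_eq_zero_of_ae_eq measurableSet_Icc hY₁b hY₂_eq_b, sub_zero]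
  exact setIntegral_nonneg measurableSet_Icc fun t _ => le_max_right _ _

theorem stmt_11 (T : ℝ) (hT : 0 < T) (a b Y₁ Y₂ : ℝ → ℝ)
    (ha : ContinuousOn a (Icc 0 T)) (hb : ContinuousOn b (Icc 0 T))
    (hY₁ : ContinuousOn Y₁ (Icc 0 T)) (hY₂ : ContinuousOn Y₂ (Icc 0 T))
    (hab : ∀ t ∈ Icc 0 T, a t ≤ b t)
    (haY₁ : ∀ t ∈ Icc 0 T, a t ≤ Y₁ t) (hY₁b : ∀ t ∈ Icc 0 T, Y₁ t ≤ b t)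
    (haY₂ : ∀ t ∈ Icc 0 T, a t ≤ Y₂ t) (hY₂b : ∀ t ∈ Icc 0 T, Y₂ t ≤ b t)
    (K₁ K₂ : StieltjesFunction ℝ)
    (hSk₁ : ∫ t in Icc 0 T, (b t - Y₁ t) ∂K₁.measure = 0)
    (hSk₂ : ∫ t in Icc 0 T, (b t - Y₂ t) ∂K₂.measure = 0) :
    0 ≤ (∫ t in Icc 0 T, max (Y₁ t - Y₂ t) 0 ∂K₁.measure) -
        ∫ t in Icc 0 T, max (Y₁ t - Y₂ t) 0 ∂K₂.measure :=
  stmt_11_general T b Y₁ Y₂ hb hY₂ hY₁b hY₂b K₁ K₂ hSk₂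
end

section
/- Let Y, L, U : [0,T] → ℝ be continuous with L ≤ Y ≤ U, and K⁺, K⁻ increasing with K⁺(0) = K⁻(0) = 0 satisfying the Skorokhod conditions ∫_0^T (Y_t − L_t) dK⁺_t = 0 and ∫_0^T (Y_t − U_t) dK⁻_t = 0. If Y', K'⁺, K'⁻ is another such system with the same barriers, then ∫_0^T (Y_t − Y'_t) d((K⁺_t − K'⁺_t) − (K⁻_t − K'⁻_t)) ≤ 0. -/
/-!
By the Skorokhod conditions, `dK⁺` only charges `{Y = L}`, where `Y - Y' = L - Y' ≤ 0`, and
`dK⁻` only charges `{Y = U}`, where `Y - Y' = U - Y' ≥ 0`; symmetrically for `K'⁺` and `K'⁻`.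
So each of the four integrals has the sign that makes the combination nonpositive.
-/

open Set MeasureTheory

section SetIntegralOfZeroSet

variable {α : Type*} [MeasurableSpace α] {μ : Measure α} {s : Set α} {f g : α → ℝ}

theorem setIntegral_nonpos_of_setIntegral_eq_zero (hs : MeasurableSet s)
    (hf : IntegrableOn f s μ) (hf_nonneg : ∀ t ∈ s, 0 ≤ f t) (hf_zero : ∫ t in s, f t ∂μ = 0)
    (hg : ∀ t ∈ s, f t = 0 → g t ≤ 0) : ∫ t in s, g t ∂μ ≤ 0 := by
  have hf_ae_nonneg : 0 ≤ᵐ[μ.restrict s] f := by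
    filter_upwards [ae_restrict_mem hs] with t ht using hf_nonneg t ht
  have hf_ae_zero : f =ᵐ[μ.restrict s] 0 :=
    (integral_eq_zero_iff_of_nonneg_ae hf_ae_nonneg hf).mp hf_zero
  refine integral_nonpos_of_ae ?_
  filter_upwards [hf_ae_zero, ae_restrict_mem hs] with t hft ht using hg t ht hft

theorem setIntegral_nonneg_of_setIntegral_eq_zero (hs : MeasurableSet s)
    (hf : IntegrableOn f s μ) (hf_nonneg : ∀ t ∈ s, 0 ≤ f t) (hf_zero : ∫ t in s, f t ∂μ = 0)
    (hg : ∀ t ∈ s, f t = 0 → 0 ≤ g t) : 0 ≤ ∫ t in s, g t ∂μ := by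
  have := setIntegral_nonpos_of_setIntegral_eq_zero (g := fun t ↦ -g t) hs hf hf_nonneg hf_zero
    fun t ht hft ↦ neg_nonpos.mpr (hg t ht hft)
  rwa [integral_neg, neg_nonpos] at this

end SetIntegralOfZeroSet

theorem stmt_12_general (T : ℝ) (L U Y Y' : ℝ → ℝ)
    (hL : ContinuousOn L (Icc 0 T)) (hU : ContinuousOn U (Icc 0 T))
    (hY : ContinuousOn Y (Icc 0 T)) (hY' : ContinuousOn Y' (Icc 0 T))
    (hLY : ∀ t ∈ Icc 0 T, L t ≤ Y t) (hYU : ∀ t ∈ Icc 0 T, Y t ≤ U t)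
    (hLY' : ∀ t ∈ Icc 0 T, L t ≤ Y' t) (hY'U : ∀ t ∈ Icc 0 T, Y' t ≤ U t)
    (Kp Km Kp' Km' : StieltjesFunction ℝ)
    (hSkp : ∫ t in Icc 0 T, (Y t - L t) ∂Kp.measure = 0)
    (hSkm : ∫ t in Icc 0 T, (U t - Y t) ∂Km.measure = 0)
    (hSkp' : ∫ t in Icc 0 T, (Y' t - L t) ∂Kp'.measure = 0)
    (hSkm' : ∫ t in Icc 0 T, (U t - Y' t) ∂Km'.measure = 0) :
    ((∫ t in Icc 0 T, (Y t - Y' t) ∂Kp.measure) -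
      ∫ t in Icc 0 T, (Y t - Y' t) ∂Kp'.measure) -
    ((∫ t in Icc 0 T, (Y t - Y' t) ∂Km.measure) -
      ∫ t in Icc 0 T, (Y t - Y' t) ∂Km'.measure) ≤ 0 := by
  have hIcc : MeasurableSet (Icc 0 T) := measurableSet_Icc
  have hKp : ∫ t in Icc 0 T, (Y t - Y' t) ∂Kp.measure ≤ 0 :=
    setIntegral_nonpos_of_setIntegral_eq_zero hIcc
      ((hY.sub hL).integrableOn_compact isCompact_Icc) (fun t ht ↦ sub_nonneg.mpr (hLY t ht))
      hSkp fun t ht (h : Y t - L t = 0) ↦ by linarith [hLY' t ht]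
  have hKp' : 0 ≤ ∫ t in Icc 0 T, (Y t - Y' t) ∂Kp'.measure :=
    setIntegral_nonneg_of_setIntegral_eq_zero hIcc
      ((hY'.sub hL).integrableOn_compact isCompact_Icc) (fun t ht ↦ sub_nonneg.mpr (hLY' t ht))
      hSkp' fun t ht (h : Y' t - L t = 0) ↦ by linarith [hLY t ht]
  have hKm : 0 ≤ ∫ t in Icc 0 T, (Y t - Y' t) ∂Km.measure :=
    setIntegral_nonneg_of_setIntegral_eq_zero hIcc
      ((hU.sub hY).integrableOn_compact isCompact_Icc) (fun t ht ↦ sub_nonneg.mpr (hYU t ht))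
      hSkm fun t ht (h : U t - Y t = 0) ↦ by linarith [hY'U t ht]
  have hKm' : ∫ t in Icc 0 T, (Y t - Y' t) ∂Km'.measure ≤ 0 :=
    setIntegral_nonpos_of_setIntegral_eq_zero hIcc
      ((hU.sub hY').integrableOn_compact isCompact_Icc) (fun t ht ↦ sub_nonneg.mpr (hY'U t ht))
      hSkm' fun t ht (h : U t - Y' t = 0) ↦ by linarith [hYU t ht]
  linarith

theorem stmt_12 (T : ℝ) (hT : 0 < T) (L U Y Y' : ℝ → ℝ)
    (hL : ContinuousOn L (Icc 0 T)) (hU : ContinuousOn U (Icc 0 T))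
    (hY : ContinuousOn Y (Icc 0 T)) (hY' : ContinuousOn Y' (Icc 0 T))
    (hLY : ∀ t ∈ Icc 0 T, L t ≤ Y t) (hYU : ∀ t ∈ Icc 0 T, Y t ≤ U t)
    (hLY' : ∀ t ∈ Icc 0 T, L t ≤ Y' t) (hY'U : ∀ t ∈ Icc 0 T, Y' t ≤ U t)
    (Kp Km Kp' Km' : StieltjesFunction ℝ)
    (hSkp : ∫ t in Icc 0 T, (Y t - L t) ∂Kp.measure = 0)
    (hSkm : ∫ t in Icc 0 T, (U t - Y t) ∂Km.measure = 0)
    (hSkp' : ∫ t in Icc 0 T, (Y' t - L t) ∂Kp'.measure = 0)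
    (hSkm' : ∫ t in Icc 0 T, (U t - Y' t) ∂Km'.measure = 0) :
    ((∫ t in Icc 0 T, (Y t - Y' t) ∂Kp.measure) -
      ∫ t in Icc 0 T, (Y t - Y' t) ∂Kp'.measure) -
    ((∫ t in Icc 0 T, (Y t - Y' t) ∂Km.measure) -
      ∫ t in Icc 0 T, (Y t - Y' t) ∂Km'.measure) ≤ 0 :=
  stmt_12_general T L U Y Y' hL hU hY hY' hLY hYU hLY' hY'U Kp Km Kp' Km' hSkp hSkm hSkp' hSkm'
end
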